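/- The relation ∼_d on I^cf_λ, defined by α ∼_d β if and only if d̄(α) − r̄(α) = d̄(β) − r̄(β), is a congruence on the semigroup I^cf_λ, and the quotient semigroup I^cf_λ/∼_d is isomorphic to the additive group of integers ℤ(+); in fact, the map h : I^cf_λ → ℤ(+) given by (α)h = d̄(α) − r̄(α) is a surjective semigroup homomorphism with (α)h = (β)h if and only if α ∼_d β. -/

import Mathlib

open Function Set

namespace IcfPaper

variable {ι : Type*}

lemma trans_none_finite {f g : ι ≃. ι}
    (hf : {a | f a = none}.Finite) (hg : {b | g b = none}.Finite) :
    {a | (f.trans g) a = none}.Finite := by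
  have hsub : {a | (f.trans g) a = none} ⊆
      {a | f a = none} ∪ ⋃ b ∈ {b | g b = none}, {a | f.symm b = some a} := by
    intro a ha
    simp only [Set.mem_setOf_eq] at ha
    rcases hfa : f a with _ | b
    · exact Or.inl hfa
    · have hg' : g b = none := by
        have : (f.trans g) a = (f a).bind g := rfl
        rw [this, hfa] at ha
        exact ha
      refine Or.inr ?_
      refine Set.mem_biUnion hg' ?_
      exact (PEquiv.eq_some_iff f).2 hfa
  refine Set.Finite.subset (hf.union (hg.biUnion ?_)) hsub
  intro b _
  apply Set.Subsingleton.finite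
  intro a1 h1 a2 h2
  simp only [Set.mem_setOf_eq] at h1 h2
  rw [h1] at h2
  exact Option.some_injective _ h2

/-- The monoid of injective partial selfmaps of `ι` with cofinite domain and range. -/
def Icf (ι : Type*) : Type _ :=
  {f : ι ≃. ι // {a | f a = none}.Finite ∧ {b | f.symm b = none}.Finite}

namespace Icf

instance : Monoid (Icf ι) where
  mul f g := ⟨f.1.trans g.1, trans_none_finite f.2.1 g.2.1, by
      rw [PEquiv.symm_trans_rev]
      exact trans_none_finite g.2.2 f.2.2⟩
  one := ⟨PEquiv.refl ι, by
      constructor <;>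
      · convert Set.finite_empty
        ext a
        simp only [Set.mem_setOf_eq, Set.mem_empty_iff_false, iff_false]
        intro h
        first | exact Option.some_ne_none _ h | simp at h⟩
  mul_assoc a b c := Subtype.ext (PEquiv.trans_assoc _ _ _)
  one_mul a := Subtype.ext (PEquiv.refl_trans _)
  mul_one a := Subtype.ext (PEquiv.trans_refl _)

/-- The domain of an element of `Icf ι`. -/
def dom (f : Icf ι) : Set ι := {a | (f.1 a).isSome}

/-- The range of an element of `Icf ι`. -/
def ran (f : Icf ι) : Set ι := {b | (f.1.symm b).isSome}

/-- `d̄ f`, the number of points of `ι` outside of the domain of `f`. -/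
noncomputable def dbar (f : Icf ι) : ℕ := (dom f)ᶜ.ncard

/-- `r̄ f`, the number of points of `ι` outside of the range of `f`. -/
noncomputable def rbar (f : Icf ι) : ℕ := (ran f)ᶜ.ncard

end Icf

/-- The bicyclic semigroup `⟨p, q | pq = 1⟩`, realized as `ℕ × ℕ` with the operation
`(a,b)(c,d) = (a - b + max(b,c), d - c + max(b,c))`. -/
def Bicyclic : Type := ℕ × ℕ

instance : Mul Bicyclic :=
  ⟨fun x y => (x.1 - x.2 + max x.2 y.1, y.2 - y.1 + max x.2 y.1)⟩


/-! The index `d̄ α - r̄ α` is additive: the points of `dom α` that leave the domain of `αβ`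
correspond under `α` to `ran α \ dom β`, and dually the points of `ran β` that leave the range
correspond under `β⁻¹` to `dom β \ ran α`; what remains of the defects `(dom β)ᶜ` and `(ran α)ᶜ`
is their common part, which cancels. An embedding `λ ↪ λ` whose range misses exactly `n` points
(it exists since `λ ⊕ n ≃ λ`) has index `-n`, and its inverse has index `n`. -/

section PartialBijections

variable {α β γ : Type*}

theorem _root_.PEquiv.trans_apply (f : α ≃. β) (g : β ≃. γ) (a : α) :
    f.trans g a = (f a).bind g := rfl

theorem _root_.PEquiv.injOn_isSome (f : α ≃. β) : InjOn f {a | (f a).isSome} := by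
  intro a₁ h₁ a₂ _ h
  obtain ⟨b, hb⟩ := Option.isSome_iff_exists.1 h₁
  exact f.inj hb (h ▸ hb)

theorem _root_.PEquiv.encard_setOf_trans_eq_none (f : α ≃. β) (g : β ≃. γ) :
    {a | f.trans g a = none}.encard =
      {a | f a = none}.encard + {b | (f.symm b).isSome ∧ g b = none}.encard := by
  set E := {a | ∃ b, f a = some b ∧ g b = none}
  have hsplit : {a | f.trans g a = none} = {a | f a = none} ∪ E := by
    ext a
    cases h : f a <;> simp [E, f.trans_apply, h]
  have hdisj : Disjoint {a | f a = none} E := by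
    simp +contextual [E, Set.disjoint_left]
  have himage : f '' E = some '' {b | (f.symm b).isSome ∧ g b = none} := by
    ext x
    constructor
    · rintro ⟨a, ⟨b, hb, hg⟩, rfl⟩
      exact ⟨b, ⟨by simp [f.eq_some_iff.2 hb], hg⟩, hb.symm⟩
    · rintro ⟨b, ⟨hb, hg⟩, rfl⟩
      obtain ⟨a, ha⟩ := Option.isSome_iff_exists.1 hb
      exact ⟨a, ⟨b, f.eq_some_iff.1 ha, hg⟩, f.eq_some_iff.1 ha⟩
  have hinj : InjOn f E := f.injOn_isSome.mono fun a ⟨b, hb, _⟩ ↦ by simp [hb]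
  rw [hsplit, encard_union_eq hdisj, ← hinj.encard_image, himage,
    Option.some_injective _ |>.encard_image]

theorem _root_.PEquiv.encard_setOf_eq_none_split (f : α ≃. β) (g : β ≃. γ) :
    {b | g b = none}.encard =
      {b | (f.symm b).isSome ∧ g b = none}.encard + {b | f.symm b = none ∧ g b = none}.encard := by
  rw [← encard_union_eq]
  · congr 1; ext b; cases h : f.symm b <;> simp [h]
  · rw [Set.disjoint_left]
    rintro b ⟨hb, -⟩ ⟨hb', -⟩
    simp [hb'] at hb

/- `d̄(fg) - r̄(fg) = (d̄ f - r̄ f) + (d̄ g - r̄ g)`, with the subtractions moved across so that it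
holds in `ℕ∞` without finiteness assumptions. -/
theorem _root_.PEquiv.encard_trans_eq_none_add (f : α ≃. β) (g : β ≃. γ) :
    {a | f.trans g a = none}.encard + {b | f.symm b = none}.encard +
        {c | g.symm c = none}.encard =
      {c | (f.trans g).symm c = none}.encard + {a | f a = none}.encard +
        {b | g b = none}.encard := by
  have hran := g.symm.encard_setOf_trans_eq_none f.symm
  have hf := g.symm.encard_setOf_eq_none_split f.symm
  rw [PEquiv.symm_symm] at hran hf
  rw [f.encard_setOf_trans_eq_none g, PEquiv.symm_trans_rev, hran, hf,
    f.encard_setOf_eq_none_split g]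
  simp only [and_comm]
  ac_rfl

noncomputable def _root_.Function.Embedding.toPEquiv (e : α ↪ β) : α ≃. β where
  toFun a := some (e a)
  invFun := partialInv e
  inv a b := (e.injective.isPartialInv a b).trans Option.some_inj.symm

@[simp]
theorem _root_.Function.Embedding.toPEquiv_apply (e : α ↪ β) (a : α) :
    e.toPEquiv a = some (e a) := rfl

@[simp]
theorem _root_.Function.Embedding.toPEquiv_symm_apply (e : α ↪ β) (b : β) :
    e.toPEquiv.symm b = partialInv e b := rfl

theorem _root_.Function.Embedding.setOf_toPEquiv_eq_none (e : α ↪ β) :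
    {a | e.toPEquiv a = none} = ∅ := by
  simp

theorem _root_.Function.Embedding.setOf_toPEquiv_symm_eq_none (e : α ↪ β) :
    {b | e.toPEquiv.symm b = none} = (range e)ᶜ := by
  ext b
  simp [Option.eq_none_iff_forall_ne_some, e.injective.isPartialInv _ b]

end PartialBijections

lemma exists_embedding_encard_compl_range (α : Type*) [Infinite α] (n : ℕ) :
    ∃ e : α ↪ α, (range e)ᶜ.encard = n := by
  obtain ⟨E⟩ : Nonempty (α ⊕ Fin n ≃ α) := by
    rw [← Cardinal.eq, Cardinal.mk_sum, Cardinal.mk_fin, Cardinal.lift_id',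
      Cardinal.lift_natCast]
    exact Cardinal.add_nat_eq n (Cardinal.infinite_iff.1 ‹_›)
  refine ⟨⟨E ∘ Sum.inl, E.injective.comp Sum.inl_injective⟩, ?_⟩
  have hcompl : (range (E ∘ Sum.inl))ᶜ = range (E ∘ Sum.inr) := by
    rw [range_comp, range_comp, ← image_compl_eq E.bijective, compl_range_inl]
  rw [Embedding.coeFn_mk, hcompl, ← image_univ,
    (E.injective.comp Sum.inr_injective).encard_image, encard_univ]
  simp

namespace Icf

/- The homomorphism `h` of the paper. -/
noncomputable def index (f : Icf ι) : ℤ := dbar f - rbar f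

lemma compl_dom (f : Icf ι) : (dom f)ᶜ = {a | f.1 a = none} := by
  ext a
  simp [dom]

lemma compl_ran (f : Icf ι) : (ran f)ᶜ = {b | f.1.symm b = none} := by
  ext b
  simp [ran]

lemma cast_dbar (f : Icf ι) : (dbar f : ℕ∞) = {a | f.1 a = none}.encard := by
  rw [dbar, compl_dom, f.2.1.cast_ncard_eq]

lemma cast_rbar (f : Icf ι) : (rbar f : ℕ∞) = {b | f.1.symm b = none}.encard := by
  rw [rbar, compl_ran, f.2.2.cast_ncard_eq]

lemma dbar_mul_add_rbar_add_rbar (f g : Icf ι) :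
    dbar (f * g) + rbar f + rbar g = rbar (f * g) + dbar f + dbar g := by
  apply Nat.cast_injective (R := ℕ∞)
  push_cast [cast_dbar, cast_rbar]
  exact f.1.encard_trans_eq_none_add g.1

lemma index_mul (f g : Icf ι) : index (f * g) = index f + index g := by
  have := dbar_mul_add_rbar_add_rbar f g
  simp only [index]
  omega

def symm (f : Icf ι) : Icf ι := ⟨f.1.symm, f.2.2, f.2.1⟩

lemma index_symm (f : Icf ι) : index f.symm = -index f :=
  (neg_sub (dbar f : ℤ) (rbar f)).symm

noncomputable def ofEmbedding (e : ι ↪ ι) (he : (range e)ᶜ.Finite) : Icf ι :=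
  ⟨e.toPEquiv, by simp only [e.setOf_toPEquiv_eq_none, finite_empty],
    by rwa [e.setOf_toPEquiv_symm_eq_none]⟩

lemma index_ofEmbedding (e : ι ↪ ι) (he : (range e)ᶜ.Finite) :
    index (ofEmbedding e he) = -(range e)ᶜ.ncard := by
  rw [index, dbar, rbar, compl_dom, compl_ran]
  change ({a | e.toPEquiv a = none}.ncard : ℤ) - {b | e.toPEquiv.symm b = none}.ncard = _
  rw [e.setOf_toPEquiv_eq_none, e.setOf_toPEquiv_symm_eq_none, ncard_empty, Nat.cast_zero,
    zero_sub]

lemma index_surjective [Infinite ι] : Surjective (index : Icf ι → ℤ) := by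
  intro n
  obtain ⟨m, hm⟩ := Int.eq_nat_or_neg n
  obtain ⟨e, he⟩ := exists_embedding_encard_compl_range ι m
  have hindex : index (ofEmbedding e (finite_of_encard_eq_coe he)) = -m := by
    rw [index_ofEmbedding, ncard_def, he, ENat.toNat_natCast]
  rcases hm with rfl | rfl
  · exact ⟨_, by rw [index_symm, hindex, neg_neg]⟩
  · exact ⟨_, hindex⟩

end Icf

/-- The relation `α ∼_d β ↔ d̄(α) − r̄(α) = d̄(β) − r̄(β)` is a congruence on `Icf ι` and
the quotient is isomorphic to `ℤ(+)`: the map `h(α) = d̄(α) − r̄(α)` is a surjective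
homomorphism to `ℤ(+)` whose kernel relation is exactly `∼_d`. -/
theorem statement17 {ι : Type*} [Infinite ι] :
    (∀ a a' b b' : Icf ι,
      (Icf.dbar a : ℤ) - (Icf.rbar a : ℤ) = (Icf.dbar a' : ℤ) - (Icf.rbar a' : ℤ) →
      (Icf.dbar b : ℤ) - (Icf.rbar b : ℤ) = (Icf.dbar b' : ℤ) - (Icf.rbar b' : ℤ) →
      (Icf.dbar (a * b) : ℤ) - (Icf.rbar (a * b) : ℤ) =
        (Icf.dbar (a' * b') : ℤ) - (Icf.rbar (a' * b') : ℤ)) ∧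
    Function.Surjective (fun α : Icf ι => (Icf.dbar α : ℤ) - (Icf.rbar α : ℤ)) ∧
    (∀ a b : Icf ι,
      (Icf.dbar (a * b) : ℤ) - (Icf.rbar (a * b) : ℤ) =
        ((Icf.dbar a : ℤ) - (Icf.rbar a : ℤ)) + ((Icf.dbar b : ℤ) - (Icf.rbar b : ℤ))) := by
  refine ⟨fun a a' b b' ha hb => ?_, Icf.index_surjective, Icf.index_mul⟩
  change Icf.index (a * b) = Icf.index (a' * b')
  rw [Icf.index_mul, Icf.index_mul]
  exact congrArg₂ (· + ·) ha hb


end IcfPaper
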